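/- arXiv:1605.03753 — 5 statements merged into one kernel-verified Lean document; each statement's English description precedes it below -/
import Mathlib

section
/- Let p ≥ 7 be a natural number and let (u_n) be the integer sequence defined by u_0 = 1, u_1 = p−4 and u_{n+2} = (p−4)·u_{n+1} − u_n. Then for all natural numbers n ≥ 1 and k ≥ 1, (p−5)·u_{n+k} + (p−5)·u_n + Σ_{i=1}^{k−1} (p−6)·u_{n+i} = u_{n+k+1} + u_{n−1}. -/
open Finset

/- Multiplying the sum by `a` and applying the recurrence `a u_j = u_{j+1} + u_{j-1}` termwise
shifts it once forward and once backward; the two shifted copies telescope against the sum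
itself, leaving only boundary terms. -/

section LinearRecurrence

variable {R : Type*} [CommRing R] {a : R} {u : ℕ → R}

theorem sub_two_mul_sum_range_of_rec (hu : ∀ n, u (n + 2) = a * u (n + 1) - u n) (n k : ℕ) :
    (a - 2) * ∑ i ∈ range k, u (n + 1 + i) = u (n + k + 1) + u n - u (n + 1) - u (n + k) := by
  induction k with
  | zero => simp
  | succ k ih =>
    rw [sum_range_succ, mul_add, add_right_comm n 1 k, ← add_assoc]
    linear_combination ih - hu (n + k)

theorem sum_Icc_one_eq_sum_range (f : ℕ → R) (n j : ℕ) :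
    ∑ i ∈ Icc 1 j, f (n + i) = ∑ i ∈ range j, f (n + 1 + i) := by
  rw [← Ico_add_one_right_eq_Icc, sum_Ico_eq_sum_range, Nat.add_sub_cancel]
  simp only [add_assoc]

end LinearRecurrence

theorem stmt_0_general (p : ℕ) (u : ℕ → ℤ)
    (hurec : ∀ n, u (n + 2) = ((p : ℤ) - 4) * u (n + 1) - u n) :
    ∀ n k : ℕ, 1 ≤ n → 1 ≤ k →
      ((p : ℤ) - 5) * u (n + k) + ((p : ℤ) - 5) * u n +
        ∑ i ∈ Finset.Icc 1 (k - 1), ((p : ℤ) - 6) * u (n + i)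
      = u (n + k + 1) + u (n - 1) := by
  rintro n k hn hk
  obtain ⟨m, rfl⟩ : ∃ m, n = m + 1 := ⟨n - 1, by omega⟩
  obtain ⟨j, rfl⟩ : ∃ j, k = j + 1 := ⟨k - 1, by omega⟩
  rw [Nat.add_sub_cancel, Nat.add_sub_cancel, ← mul_sum, sum_Icc_one_eq_sum_range (u ·),
    ← add_assoc, show (p : ℤ) - 6 = (p : ℤ) - 4 - 2 by ring]
  linear_combination sub_two_mul_sum_range_of_rec hurec (m + 1) j - hurec (m + 1 + j) - hurec m

theorem stmt_0 (p : ℕ) (hp : 7 ≤ p) (u : ℕ → ℤ)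
    (hu0 : u 0 = 1) (hu1 : u 1 = (p : ℤ) - 4)
    (hurec : ∀ n, u (n + 2) = ((p : ℤ) - 4) * u (n + 1) - u n) :
    ∀ n k : ℕ, 1 ≤ n → 1 ≤ k →
      ((p : ℤ) - 5) * u (n + k) + ((p : ℤ) - 5) * u n +
        ∑ i ∈ Finset.Icc 1 (k - 1), ((p : ℤ) - 6) * u (n + i)
      = u (n + k + 1) + u (n - 1) :=
  stmt_0_general p u hurec
end

section
/- Let p ≥ 7 be a natural number and let (u_n) be the integer sequence defined by u_0 = 1, u_1 = p−4 and u_{n+2} = (p−4)·u_{n+1} − u_n. Then for all natural numbers n ≥ 0 and k ≥ 1, (p−5)·u_{n+k} + Σ_{i=1}^{k−1} (p−6)·u_{n+i} < u_{n+k+1}. -/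
section ChebyshevLikeRecurrence

variable {R : Type*} [CommRing R] [LinearOrder R] [IsStrictOrderedRing R]
  {c : R} {u : ℕ → R}

theorem nonneg_and_lt_succ_of_recurrence (hc : 2 ≤ c) (hu0 : 0 ≤ u 0) (hu01 : u 0 < u 1)
    (hrec : ∀ n, u (n + 2) = c * u (n + 1) - u n) (n : ℕ) : 0 ≤ u n ∧ u n < u (n + 1) := by
  induction n with
  | zero => exact ⟨hu0, hu01⟩
  | succ n ih =>
    obtain ⟨hpos, hlt⟩ := ih
    refine ⟨hpos.trans hlt.le, ?_⟩
    rw [hrec n]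
    -- u (n+2) - u (n+1) = (c - 2) u (n+1) + (u (n+1) - u n)
    nlinarith

theorem sum_add_lt_of_recurrence (hrec : ∀ n, u (n + 2) = c * u (n + 1) - u n) {n : ℕ}
    (hn : u n < u (n + 1)) (m : ℕ) :
    (c - 1) * u (n + m + 1) + ∑ i ∈ Finset.Icc 1 m, (c - 2) * u (n + i) < u (n + m + 2) := by
  induction m with
  | zero =>
    rw [Finset.Icc_eq_empty_of_lt zero_lt_one, Finset.sum_empty, hrec]
    linarith
  | succ m ih =>
    -- after expanding u (n+m+3) by the recurrence, the claim for m + 1 is the claim for m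
    rw [Finset.sum_Icc_succ_top (Nat.le_add_left 1 m), hrec,
      show n + (m + 1) = n + m + 1 from rfl, show n + m + 1 + 1 = n + m + 2 from rfl]
    linarith

end ChebyshevLikeRecurrence

theorem stmt_4 (p : ℕ) (hp : 7 ≤ p) (u : ℕ → ℤ)
    (hu0 : u 0 = 1) (hu1 : u 1 = (p : ℤ) - 4)
    (hurec : ∀ n, u (n + 2) = ((p : ℤ) - 4) * u (n + 1) - u n) :
    ∀ n k : ℕ, 1 ≤ k →
      ((p : ℤ) - 5) * u (n + k) +
        ∑ i ∈ Finset.Icc 1 (k - 1), ((p : ℤ) - 6) * u (n + i)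
      < u (n + k + 1) := by
  intro n k hk
  obtain ⟨m, rfl⟩ : ∃ m, k = m + 1 := ⟨k - 1, by omega⟩
  have hp' : (7 : ℤ) ≤ p := by exact_mod_cast hp
  obtain ⟨-, hmono⟩ := nonneg_and_lt_succ_of_recurrence (by linarith) (by rw [hu0]; norm_num)
    (by rw [hu0, hu1]; linarith) hurec n
  have key := sum_add_lt_of_recurrence hurec hmono m
  rw [add_tsub_cancel_right, ← add_assoc]
  rw [show (p : ℤ) - 4 - 1 = p - 5 by ring, show (p : ℤ) - 4 - 2 = p - 6 by ring] at key
  exact key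
end

section
/- Let p ≥ 7 be a natural number, let (u_n) be the integer sequence defined by u_0 = 1, u_1 = p−4 and u_{n+2} = (p−4)·u_{n+1} − u_n, and let U_n = Σ_{k=0}^{n} u_k. Then for every natural number n ≥ 1, U_n + (p−6)·u_n < u_{n+1} < U_n + (p−5)·u_n. -/
/-!
Write `a = p - 4 ≥ 3`; then `u` is nonnegative and nondecreasing. Unfolding the recurrence once,
the upper gap `U n + (a - 1) u n - u (n + 1)` equals `U (n - 1) + u (n - 1) > 0`, while the lower
gap `u (n + 1) - U n - (a - 2) u n` equals `a - 2` at `n = 1` and grows by `(a - 3) u n ≥ 0` at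
each step.
-/

open Finset

namespace ChebyshevSeq

variable {a : ℤ} {u : ℕ → ℤ}

theorem nonneg_and_le_succ (ha : 2 ≤ a) (h0 : u 0 = 1) (h1 : u 1 = a)
    (hrec : ∀ n, u (n + 2) = a * u (n + 1) - u n) (n : ℕ) : 0 ≤ u n ∧ u n ≤ u (n + 1) := by
  induction n with
  | zero => rw [h0, h1]; constructor <;> linarith
  | succ n ih =>
    obtain ⟨hn, hle⟩ := ih
    refine ⟨by linarith, ?_⟩
    rw [hrec]
    nlinarith

theorem one_le_sum_range (h0 : u 0 = 1) (hnonneg : ∀ n, 0 ≤ u n) (n : ℕ) :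
    1 ≤ ∑ k ∈ range (n + 1), u k := by
  rw [sum_range_succ', h0, le_add_iff_nonneg_left]
  exact sum_nonneg fun k _ => hnonneg (k + 1)

theorem sum_range_add_mul_lt_succ (ha : 3 ≤ a) (h0 : u 0 = 1) (h1 : u 1 = a)
    (hrec : ∀ n, u (n + 2) = a * u (n + 1) - u n) (hnonneg : ∀ n, 0 ≤ u n) :
    ∀ n, 1 ≤ n → ∑ k ∈ range (n + 1), u k + (a - 2) * u n < u (n + 1) := by
  intro n hn
  induction n, hn using Nat.le_induction with
  | base =>
    rw [hrec 0, sum_range_succ, sum_range_one, h0, h1]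
    linarith
  | succ n _ ih =>
    rw [hrec, sum_range_succ]
    nlinarith [mul_nonneg (sub_nonneg.2 ha) (hnonneg n)]

theorem succ_lt_sum_range_add_mul (h0 : u 0 = 1) (hrec : ∀ n, u (n + 2) = a * u (n + 1) - u n)
    (hnonneg : ∀ n, 0 ≤ u n) (n : ℕ) :
    u (n + 2) < ∑ k ∈ range (n + 2), u k + (a - 1) * u (n + 1) := by
  rw [hrec, sum_range_succ]
  linarith [one_le_sum_range h0 hnonneg n, hnonneg n]

end ChebyshevSeq

open ChebyshevSeq in
theorem stmt_8 (p : ℕ) (hp : 7 ≤ p) (u : ℕ → ℤ)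
    (hu0 : u 0 = 1) (hu1 : u 1 = (p : ℤ) - 4)
    (hurec : ∀ n, u (n + 2) = ((p : ℤ) - 4) * u (n + 1) - u n)
    (U : ℕ → ℤ) (hU : ∀ n, U n = ∑ k ∈ Finset.range (n + 1), u k) :
    ∀ n : ℕ, 1 ≤ n →
      U n + ((p : ℤ) - 6) * u n < u (n + 1) ∧ u (n + 1) < U n + ((p : ℤ) - 5) * u n := by
  have ha : (7 : ℤ) ≤ p := by exact_mod_cast hp
  have hnonneg n := (nonneg_and_le_succ (by linarith) hu0 hu1 hurec n).1
  rintro (_ | n) hn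
  · omega
  have hlower := sum_range_add_mul_lt_succ (by linarith) hu0 hu1 hurec hnonneg (n + 1) hn
  have hupper := succ_lt_sum_range_add_mul hu0 hurec hnonneg n
  rw [hU]
  constructor <;> linarith
end

section
/- Let p ≥ 7 be a natural number, let (u_n) be the integer sequence defined by u_0 = 1, u_1 = p−4, u_{n+2} = (p−4)·u_{n+1} − u_n, and let (y_n) be the integer sequence defined by y_0 = 1, y_1 = p−5, y_{n+2} = (p−4)·y_{n+1} − y_n. Then for every natural number n, Σ_{k=0}^{n+1} y_k = u_{n+1}; equivalently, with Y_n = Σ_{k=0}^{n} y_k and U_n = Σ_{k=0}^{n} u_k, one has Y_{n+1} = U_{n+1} − U_n. -/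
open Finset

/- The differences `u (n + 1) - u n` satisfy the same recurrence as `y` and agree with `y (n + 1)`
for `n = 0, 1`, so `y (n + 1) = u (n + 1) - u n` for all `n`; since also `y 0 = u 0`, the partial
sums of `y` telescope to `u`. -/

section Recurrence

variable {R : Type*} [CommRing R] (a : R)

def IsSolution (x : ℕ → R) : Prop :=
  ∀ n, x (n + 2) = a * x (n + 1) - x n

variable {a}

theorem IsSolution.sub_shift {x : ℕ → R} (hx : IsSolution a x) :
    IsSolution a (fun n => x (n + 1) - x n) := by
  intro n
  simp only
  rw [hx (n + 1), hx n]
  ring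

theorem IsSolution.eq_of_eq_of_eq {x z : ℕ → R} (hx : IsSolution a x) (hz : IsSolution a z)
    (h0 : x 0 = z 0) (h1 : x 1 = z 1) (n : ℕ) : x n = z n := by
  induction n using Nat.twoStepInduction with
  | zero => exact h0
  | one => exact h1
  | more n ih₀ ih₁ => rw [hx n, hz n, ih₀, ih₁]

end Recurrence

theorem sum_range_succ_eq_of_eq_sub {G : Type*} [AddCommGroup G] {u y : ℕ → G}
    (h0 : y 0 = u 0) (hy : ∀ n, y (n + 1) = u (n + 1) - u n) (n : ℕ) :
    ∑ k ∈ range (n + 1), y k = u n := by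
  rw [sum_range_succ', sum_congr rfl fun k _ => hy k, sum_range_sub, h0]
  abel

theorem stmt_12_general (p : ℕ)
    (u : ℕ → ℤ) (hu0 : u 0 = 1) (hu1 : u 1 = (p : ℤ) - 4)
    (hurec : ∀ n, u (n + 2) = ((p : ℤ) - 4) * u (n + 1) - u n)
    (y : ℕ → ℤ) (hy0 : y 0 = 1) (hy1 : y 1 = (p : ℤ) - 5)
    (hyrec : ∀ n, y (n + 2) = ((p : ℤ) - 4) * y (n + 1) - y n)
    (Y U : ℕ → ℤ)
    (hY : ∀ n, Y n = ∑ k ∈ Finset.range (n + 1), y k)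
    (hU : ∀ n, U n = ∑ k ∈ Finset.range (n + 1), u k) :
    ∀ n : ℕ, (∑ k ∈ Finset.range (n + 2), y k) = u (n + 1) ∧
      Y (n + 1) = U (n + 1) - U n := by
  have hu : IsSolution ((p : ℤ) - 4) u := hurec
  have hy_shift : IsSolution ((p : ℤ) - 4) (fun n => y (n + 1)) := fun n => hyrec (n + 1)
  have hy_diff : ∀ n, y (n + 1) = u (n + 1) - u n :=
    hy_shift.eq_of_eq_of_eq hu.sub_shift
      (show y 1 = u 1 - u 0 by rw [hy1, hu1, hu0]; ring)
      (show y (0 + 2) = u (0 + 2) - u (0 + 1) by rw [hyrec 0, hurec 0, hy1, hy0, hu1, hu0]; ring)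
  have hsum : ∀ n, ∑ k ∈ range (n + 2), y k = u (n + 1) :=
    fun n => sum_range_succ_eq_of_eq_sub (hy0.trans hu0.symm) hy_diff (n + 1)
  intro n
  refine ⟨hsum n, ?_⟩
  rw [hY, hU, hU, sum_range_succ u (n + 1), hsum n]
  ring

theorem stmt_12 (p : ℕ) (hp : 7 ≤ p)
    (u : ℕ → ℤ) (hu0 : u 0 = 1) (hu1 : u 1 = (p : ℤ) - 4)
    (hurec : ∀ n, u (n + 2) = ((p : ℤ) - 4) * u (n + 1) - u n)
    (y : ℕ → ℤ) (hy0 : y 0 = 1) (hy1 : y 1 = (p : ℤ) - 5)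
    (hyrec : ∀ n, y (n + 2) = ((p : ℤ) - 4) * y (n + 1) - y n)
    (Y U : ℕ → ℤ)
    (hY : ∀ n, Y n = ∑ k ∈ Finset.range (n + 1), y k)
    (hU : ∀ n, U n = ∑ k ∈ Finset.range (n + 1), u k) :
    ∀ n : ℕ, (∑ k ∈ Finset.range (n + 2), y k) = u (n + 1) ∧
      Y (n + 1) = U (n + 1) - U n :=
  stmt_12_general p u hu0 hu1 hurec y hy0 hy1 hyrec Y U hY hU
end

section
/- Let p ≥ 7 be a natural number and let (u_n) be the sequence of natural numbers defined by u_0 = 1, u_1 = p−4 and u_{n+2} = (p−4)·u_{n+1} − u_n. Then every natural number N can be written as N = Σ_{i=0}^{k} a_i·u_i for some natural number k and digits a_i with 0 ≤ a_i ≤ p−5 for every i. -/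
/-! Greedy expansion: if `u 0 = 1` and `u (k + 1) ≤ (d + 1) * u k`, then every `N < u (k + 1)` has
digits `≤ d` in base `u`, obtained by taking `N / u k` as the leading digit and expanding the
remainder. The recurrence gives `u (k + 1) ≤ (p - 4) * u k` and makes `u` strictly increasing, hence
unbounded, so every `N` lies below some `u (k + 1)`. -/

open Finset

theorem exists_digits_of_lt_succ {u : ℕ → ℕ} {d : ℕ} (hu0 : u 0 = 1)
    (hu : ∀ k, u (k + 1) ≤ (d + 1) * u k) :
    ∀ k N, N < u (k + 1) → ∃ a : ℕ → ℕ, (∀ i, a i ≤ d) ∧ N = ∑ i ∈ range (k + 1), a i * u i := by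
  intro k
  induction k with
  | zero =>
    intro N hN
    have hNd : N ≤ d := by have := hu 0; rw [hu0] at this; omega
    exact ⟨fun _ => N, fun _ => hNd, by simp [hu0]⟩
  | succ k ih =>
    intro N hN
    have hlt : N < (d + 1) * u (k + 1) := hN.trans_le (hu (k + 1))
    have hpos : 0 < u (k + 1) := Nat.pos_of_mul_pos_left (Nat.zero_lt_of_lt hlt)
    have hdigit : N / u (k + 1) ≤ d :=
      Nat.lt_succ_iff.mp ((Nat.div_lt_iff_lt_mul hpos).mpr hlt)
    obtain ⟨a, ha, hsum⟩ := ih (N % u (k + 1)) (Nat.mod_lt _ hpos)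
    refine ⟨Function.update a (k + 1) (N / u (k + 1)), fun i => ?_, ?_⟩
    · rcases eq_or_ne i (k + 1) with rfl | hi
      · simpa using hdigit
      · simpa [Function.update_of_ne hi] using ha i
    · have hlow : ∑ i ∈ range (k + 1), Function.update a (k + 1) (N / u (k + 1)) i * u i
          = ∑ i ∈ range (k + 1), a i * u i :=
        sum_congr rfl fun i hi => by
          rw [Function.update_of_ne (mem_range.mp hi).ne]
      rw [sum_range_succ, hlow, ← hsum, Function.update_self]
      exact (Nat.mod_add_div' N (u (k + 1))).symm

theorem exists_digits {u : ℕ → ℕ} {d : ℕ} (hu0 : u 0 = 1)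
    (hu : ∀ k, u (k + 1) ≤ (d + 1) * u k) (hmono : StrictMono u) (N : ℕ) :
    ∃ (k : ℕ) (a : ℕ → ℕ), (∀ i, a i ≤ d) ∧ N = ∑ i ∈ range (k + 1), a i * u i :=
  ⟨N, exists_digits_of_lt_succ hu0 hu N N (Nat.lt_of_succ_le (hmono.id_le (N + 1)))⟩

theorem stmt_16 (p : ℕ) (hp : 7 ≤ p)
    (u : ℕ → ℕ) (hu0 : u 0 = 1) (hu1 : u 1 = p - 4)
    (hurec : ∀ n, u (n + 2) + u n = (p - 4) * u (n + 1)) :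
    ∀ N : ℕ, ∃ (k : ℕ) (a : ℕ → ℕ), (∀ i, a i ≤ p - 5) ∧
      N = ∑ i ∈ Finset.range (k + 1), a i * u i := by
  have hbase : p - 5 + 1 = p - 4 := by omega
  have hgrowth : ∀ k, u (k + 1) ≤ (p - 5 + 1) * u k := by
    rw [hbase]
    rintro (_ | k)
    · simp [hu0, hu1]
    · show u (k + 2) ≤ (p - 4) * u (k + 1)
      have := hurec k
      omega
  have hmono : StrictMono u := strictMono_nat_of_lt_succ fun n => by
    induction n with
    | zero => show u 0 < u 1; omega
    | succ n ih =>
      show u (n + 1) < u (n + 2)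
      have h3 : 3 * u (n + 1) ≤ (p - 4) * u (n + 1) := Nat.mul_le_mul_right _ (by omega)
      have := hurec n
      omega
  exact exists_digits hu0 hgrowth hmono
end
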